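/- arXiv:2605.03044 — 2 statements merged into one kernel-verified Lean document; each statement's English description precedes it below -/
import Mathlib

section
/- Let α > 0 and define H_α(A) = ∑_{j=1}^∞ A^j / (j! · Γ(jα)) for A ≥ 0. Then there exist positive constants C_α and ρ_α (depending only on α) such that H_α(A) ≤ C_α · A · exp(ρ_α · A^{1/(1+α)}) for all A ≥ 0. -/
/-!
Integrating the Gamma integrand over `(x, 2x]` gives `Γ(x) ≥ (x / e²)^x / 2`, and with
`m! ≤ m^m` this yields `(m!)^α ≤ K^m Γ(mα)` for `K = 2 (e² / α)^α`. Hence the `m`-th term of the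
series is at most `(KA)^m / (m!)^(1+α) ≤ KA · (y^j / j!)^(1+α)`, where `m = j + 1` and
`y = (KA)^(1/(1+α))`. Finally `∑ aⱼ^p ≤ (∑ aⱼ)^p` for `p ≥ 1` and nonnegative `aⱼ` bounds the
sum by `KA · (e^y)^(1+α)`.
-/

open Real
open scoped Nat

open MeasureTheory Set in
theorem Real.div_exp_two_rpow_self_le_two_mul_Gamma {x : ℝ} (hx : 0 < x) :
    (x / exp 2) ^ x ≤ 2 * Gamma x := by
  have hint := GammaIntegral_convergent hx
  have hsub : Ioc x (2 * x) ⊆ Ioi 0 := fun t ht => hx.trans ht.1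
  have hlower : ∀ t ∈ Ioc x (2 * x),
      exp (-(2 * x)) * (x ^ x / (2 * x)) ≤ exp (-t) * t ^ (x - 1) := by
    intro t ⟨hxt, ht2x⟩
    have ht : 0 < t := hx.trans hxt
    rw [rpow_sub_one ht.ne']
    gcongr
  calc (x / exp 2) ^ x
      = 2 * (volume.real (Ioc x (2 * x)) • (exp (-(2 * x)) * (x ^ x / (2 * x)))) := by
        rw [Real.volume_real_Ioc_of_le (by linarith), smul_eq_mul, div_rpow hx.le (exp_pos 2).le,
          ← exp_mul, exp_neg]
        field_simp
        ring
    _ ≤ 2 * ∫ t in Ioc x (2 * x), exp (-t) * t ^ (x - 1) := by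
        gcongr
        exact setIntegral_ge_of_const_le measurableSet_Ioc measure_Ioc_lt_top.ne hlower
          (hint.mono_set hsub)
    _ ≤ 2 * Gamma x := by
        rw [Gamma_eq_integral hx]
        gcongr
        filter_upwards [ae_restrict_mem measurableSet_Ioi] with t (ht : 0 < t)
          using by positivity

theorem factorial_rpow_le_pow_mul_Gamma {α : ℝ} (hα : 0 < α) {m : ℕ} (hm : m ≠ 0) :
    (m ! : ℝ) ^ α ≤ (2 * (exp 2 / α) ^ α) ^ m * Gamma (m * α) := by
  have hm0 : (0 : ℝ) < m := by positivity
  have hE : 0 ≤ exp 2 / α := by positivity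
  calc (m ! : ℝ) ^ α ≤ ((m : ℝ) ^ m) ^ α := by gcongr; exact_mod_cast m.factorial_le_pow
    _ = (exp 2 / α * (m * α / exp 2)) ^ (m * α) := by
        rw [← rpow_natCast, ← rpow_mul hm0.le]
        congr 1
        field_simp
    _ = (exp 2 / α) ^ (α * m) * (m * α / exp 2) ^ (m * α) := by
        rw [mul_rpow hE (by positivity), mul_comm α]
    _ ≤ (exp 2 / α) ^ (α * m) * (2 * Gamma (m * α)) := by
        gcongr
        exact div_exp_two_rpow_self_le_two_mul_Gamma (by positivity)
    _ = 2 * ((exp 2 / α) ^ (α * m) * Gamma (m * α)) := by ring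
    _ ≤ 2 ^ m * ((exp 2 / α) ^ (α * m) * Gamma (m * α)) := by
        have := Gamma_pos_of_pos (show 0 < m * α by positivity)
        gcongr
        exact le_self_pow₀ one_le_two hm
    _ = _ := by rw [mul_pow, rpow_mul_natCast hE]; ring

section RpowTsum

variable {ι : Type*} {a : ι → ℝ} {p : ℝ}

theorem rpow_le_rpow_tsum_sub_one_mul (ha : Summable a) (h0 : ∀ i, 0 ≤ a i) (hp : 1 ≤ p)
    (i : ι) : a i ^ p ≤ (∑' j, a j) ^ (p - 1) * a i := by
  calc a i ^ p = a i ^ (p - 1) * a i := by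
        rw [← rpow_add_one' (h0 i) (by linarith : 0 < p - 1 + 1).ne', sub_add_cancel]
    _ ≤ (∑' j, a j) ^ (p - 1) * a i :=
        mul_le_mul_of_nonneg_right
          (rpow_le_rpow (h0 i) (ha.le_tsum i fun j _ => h0 j) (by linarith)) (h0 i)

theorem Summable.rpow_of_one_le (ha : Summable a) (h0 : ∀ i, 0 ≤ a i) (hp : 1 ≤ p) :
    Summable fun i => a i ^ p :=
  (ha.mul_left _).of_nonneg_of_le (fun i => rpow_nonneg (h0 i) p)
    (rpow_le_rpow_tsum_sub_one_mul ha h0 hp)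

theorem tsum_rpow_le_rpow_tsum (ha : Summable a) (h0 : ∀ i, 0 ≤ a i) (hp : 1 ≤ p) :
    ∑' i, a i ^ p ≤ (∑' i, a i) ^ p := by
  calc ∑' i, a i ^ p ≤ ∑' i, (∑' j, a j) ^ (p - 1) * a i :=
        (ha.rpow_of_one_le h0 hp).tsum_le_tsum (rpow_le_rpow_tsum_sub_one_mul ha h0 hp)
          (ha.mul_left _)
    _ = (∑' i, a i) ^ p := by
        rw [tsum_mul_left, ← rpow_add_one' (tsum_nonneg h0) (by linarith : 0 < p - 1 + 1).ne',
          sub_add_cancel]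

end RpowTsum

theorem Real.tsum_pow_div_factorial_eq_exp (y : ℝ) : ∑' j, y ^ j / j ! = exp y := by
  rw [exp_eq_exp_ℝ, NormedSpace.exp_eq_tsum_div]

section ExpSeriesRpow

variable {y s : ℝ}

theorem summable_pow_div_factorial_rpow (hy : 0 ≤ y) (hs : 1 ≤ s) :
    Summable fun j : ℕ => (y ^ j / j !) ^ s :=
  (summable_pow_div_factorial y).rpow_of_one_le (fun _ => by positivity) hs

theorem tsum_pow_div_factorial_rpow_le (hy : 0 ≤ y) (hs : 1 ≤ s) :
    ∑' j : ℕ, (y ^ j / j !) ^ s ≤ exp (s * y) := by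
  calc ∑' j : ℕ, (y ^ j / j !) ^ s ≤ (∑' j : ℕ, y ^ j / j !) ^ s :=
        tsum_rpow_le_rpow_tsum (summable_pow_div_factorial y) (fun _ => by positivity) hs
    _ = exp (s * y) := by rw [tsum_pow_div_factorial_eq_exp, ← exp_mul, mul_comm]

end ExpSeriesRpow

section ShiftedSeries

variable {B s : ℝ}

theorem pow_succ_div_factorial_rpow_le (hB : 0 ≤ B) (hs : 0 < s) (j : ℕ) :
    B ^ (j + 1) / ((j + 1)! : ℝ) ^ s ≤ B * ((B ^ (1 / s)) ^ j / j !) ^ s := by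
  calc B ^ (j + 1) / ((j + 1)! : ℝ) ^ s ≤ B ^ (j + 1) / (j ! : ℝ) ^ s := by
        gcongr
        exact j.le_succ
    _ = B * ((B ^ (1 / s)) ^ j / j !) ^ s := by
        rw [div_rpow (by positivity) (by positivity), ← rpow_mul_natCast hB, ← rpow_mul hB,
          show 1 / s * j * s = j by field_simp, rpow_natCast, pow_succ]
        ring

theorem summable_pow_succ_div_factorial_rpow (hB : 0 ≤ B) (hs : 1 ≤ s) :
    Summable fun j : ℕ => B ^ (j + 1) / ((j + 1)! : ℝ) ^ s :=
  ((summable_pow_div_factorial_rpow (by positivity) hs).mul_left B).of_nonneg_of_le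
    (fun _ => by positivity) (pow_succ_div_factorial_rpow_le hB (by linarith))

theorem tsum_pow_succ_div_factorial_rpow_le (hB : 0 ≤ B) (hs : 1 ≤ s) :
    ∑' j : ℕ, B ^ (j + 1) / ((j + 1)! : ℝ) ^ s ≤ B * exp (s * B ^ (1 / s)) := by
  have hy : 0 ≤ B ^ (1 / s) := by positivity
  calc ∑' j : ℕ, B ^ (j + 1) / ((j + 1)! : ℝ) ^ s
      ≤ ∑' j : ℕ, B * ((B ^ (1 / s)) ^ j / j !) ^ s :=
        (summable_pow_succ_div_factorial_rpow hB hs).tsum_le_tsum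
          (pow_succ_div_factorial_rpow_le hB (by linarith))
          ((summable_pow_div_factorial_rpow hy hs).mul_left B)
    _ ≤ B * exp (s * B ^ (1 / s)) := by
        rw [tsum_mul_left]
        gcongr
        exact tsum_pow_div_factorial_rpow_le hy hs

end ShiftedSeries

theorem pow_div_factorial_mul_Gamma_le {α A : ℝ} (hα : 0 < α) (hA : 0 ≤ A) {m : ℕ} (hm : m ≠ 0) :
    A ^ m / (m ! * Gamma (m * α)) ≤ (2 * (exp 2 / α) ^ α * A) ^ m / (m ! : ℝ) ^ (1 + α) := by
  have hK : 0 < (2 * (exp 2 / α) ^ α) ^ m := by positivity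
  have hΓ : 0 < Gamma (m * α) := Gamma_pos_of_pos (by positivity)
  calc A ^ m / (m ! * Gamma (m * α))
      = (2 * (exp 2 / α) ^ α) ^ m * A ^ m /
          (m ! * ((2 * (exp 2 / α) ^ α) ^ m * Gamma (m * α))) := by
        field_simp
    _ ≤ (2 * (exp 2 / α) ^ α) ^ m * A ^ m / (m ! * (m ! : ℝ) ^ α) := by
        gcongr
        exact factorial_rpow_le_pow_mul_Gamma hα hm
    _ = (2 * (exp 2 / α) ^ α * A) ^ m / (m ! : ℝ) ^ (1 + α) := by
        rw [rpow_one_add' (by positivity) (by linarith : (0 : ℝ) < 1 + α).ne', mul_pow _ A]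

theorem wright_bound (α : ℝ) (hα : 0 < α) :
    ∃ C ρ : ℝ, 0 < C ∧ 0 < ρ ∧ ∀ A : ℝ, 0 ≤ A →
      (∑' j : ℕ, A ^ (j + 1) / ((Nat.factorial (j + 1)) * Real.Gamma ((j + 1 : ℕ) * α)))
        ≤ C * A * Real.exp (ρ * A ^ (1 / (1 + α))) := by
  set K := 2 * (exp 2 / α) ^ α
  have hK : 0 < K := by positivity
  refine ⟨K, (1 + α) * K ^ (1 / (1 + α)), hK, by positivity, fun A hA => ?_⟩
  have hterm (j : ℕ) := pow_div_factorial_mul_Gamma_le hα hA j.succ_ne_zero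
  have hterm_nonneg (j : ℕ) : 0 ≤ A ^ (j + 1) / ((j + 1)! * Gamma ((j + 1 : ℕ) * α)) := by
    have := Gamma_pos_of_pos (show 0 < ((j + 1 : ℕ) : ℝ) * α by positivity)
    positivity
  have hKA : 0 ≤ K * A := by positivity
  have hs : 1 ≤ 1 + α := by linarith
  have hsum := summable_pow_succ_div_factorial_rpow hKA hs
  calc ∑' j : ℕ, A ^ (j + 1) / ((j + 1)! * Gamma ((j + 1 : ℕ) * α))
      ≤ ∑' j : ℕ, (K * A) ^ (j + 1) / ((j + 1)! : ℝ) ^ (1 + α) :=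
        (hsum.of_nonneg_of_le hterm_nonneg hterm).tsum_le_tsum hterm hsum
    _ ≤ K * A * exp ((1 + α) * (K * A) ^ (1 / (1 + α))) :=
        tsum_pow_succ_div_factorial_rpow_le hKA hs
    _ = K * A * exp ((1 + α) * K ^ (1 / (1 + α)) * A ^ (1 / (1 + α))) := by
        rw [mul_rpow hK.le hA, mul_assoc (1 + α)]
end

section
/- Fix p ∈ (1,2), x > 0, and α = (2−p)/(p−1). Then there exist ε ∈ (0, x/2), a₀ > 0, c₀ > 0, and C₀ > 0 such that, for all sufficiently small h > 0 and all t ∈ (0, ε], the Tweedie subdensity satisfies k_h(t;x) ≤ C₀ · h^{−a₀} · e^{−c₀/h} · t^{α−1}. -/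
/-!
Bounding `e^{-t/β} ≤ 1` and `t^{kα-1} ≤ t^{α-1} ε^{(k-1)α}` for `t ≤ ε` reduces the series to
`t^{α-1} ε^{-α} H_α(A)`, where `H_α(A) = ∑_{k ≥ 1} A^k / (k! Γ(kα))` and `A = λ ε^α / β^α`.
With `n = k + ⌊kα⌋` one has `n! ≤ 2 · 4^n · k! Γ(kα)` and `A^k ≤ R^{n+1}` for
`R = A^{1/(1+α)} + 1`, so each term of `H_α(A)` is dominated by a term of the exponential series
and `H_α(A) ≤ 2R e^{4R}`. Since `A^{1/(1+α)}` is a multiple of `ε^{α/(1+α)} / h`, taking `ε` small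
makes `4R ≤ λ/2 + 4`, so `e^{-λ}` absorbs `e^{4R}` and leaves `e^{-λ/2}`.
-/

open Real Filter Topology
open scoped Nat

theorem Nat.factorial_add_le_two_pow_mul (k m : ℕ) : (k + m)! ≤ 2 ^ (k + m) * k ! * m ! := by
  rw [← Nat.add_choose_mul_factorial_mul_factorial k m]
  gcongr
  exact Nat.choose_le_two_pow _ _

theorem Real.factorial_floor_le_two_mul_Gamma_add_one {y : ℝ} (hy : 0 ≤ y) :
    (⌊y⌋₊ ! : ℝ) ≤ 2 * Gamma (y + 1) := by
  have hΓ : 0 < Gamma (y + 1) := Gamma_pos_of_pos (by linarith)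
  rcases lt_or_ge y 1 with hy1 | hy1
  · have h2 : Gamma 2 ≤ Gamma (y + 1 + 1) :=
      Gamma_strictMonoOn_Ici.monotoneOn Set.self_mem_Ici (Set.mem_Ici.mpr (by linarith))
        (by linarith)
    rw [Gamma_two, Gamma_add_one (by positivity)] at h2
    rw [Nat.floor_eq_zero.mpr hy1, Nat.factorial_zero, Nat.cast_one]
    nlinarith
  · have hm : (1 : ℝ) ≤ ⌊y⌋₊ := by exact_mod_cast Nat.one_le_floor_iff _ |>.mpr hy1
    calc (⌊y⌋₊ ! : ℝ) = Gamma (⌊y⌋₊ + 1) := (Gamma_nat_eq_factorial _).symm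
      _ ≤ Gamma (y + 1) := Gamma_strictMonoOn_Ici.monotoneOn (Set.mem_Ici.mpr (by linarith))
          (Set.mem_Ici.mpr (by linarith)) (by linarith [Nat.floor_le hy])
      _ ≤ 2 * Gamma (y + 1) := by linarith

noncomputable def wrightTerm (α A : ℝ) (k : ℕ) : ℝ := A ^ k / (k ! * Gamma (k * α))

noncomputable def wrightH (α A : ℝ) : ℝ := ∑' j : ℕ, wrightTerm α A (j + 1)

section Wright

variable {α A : ℝ}

theorem wrightTerm_nonneg (hα : 0 ≤ α) (hA : 0 ≤ A) (k : ℕ) : 0 ≤ wrightTerm α A k := by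
  unfold wrightTerm; positivity

theorem wrightTerm_le (hα : 0 < α) (hA : 0 ≤ A) {k : ℕ} (hk : 1 ≤ k) :
    wrightTerm α A k ≤
      2 * (A ^ (1 + α)⁻¹ + 1) * ((4 * (A ^ (1 + α)⁻¹ + 1)) ^ (k + ⌊k * α⌋₊) / (k + ⌊k * α⌋₊)!) := by
  set R := A ^ (1 + α)⁻¹ + 1
  set m := ⌊(k : ℝ) * α⌋₊
  set n := k + m
  have hkα : 0 < (k : ℝ) * α := mul_pos (by exact_mod_cast hk) hα
  have hfact : (n ! : ℝ) ≤ 2 * 4 ^ n * (k ! * Gamma (k * α)) := by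
    have hm : (m ! : ℝ) ≤ 2 * ((k : ℝ) * α) * Gamma (k * α) := by
      rw [mul_assoc, ← Gamma_add_one hkα.ne']
      exact factorial_floor_le_two_mul_Gamma_add_one hkα.le
    have hkαn : (k : ℝ) * α ≤ 2 ^ n := by
      have : m + 1 ≤ 2 ^ n := (Nat.lt_two_pow_self (n := n)).trans_le' (by omega)
      exact (Nat.lt_floor_add_one _).le.trans (by exact_mod_cast this)
    calc (n ! : ℝ) ≤ 2 ^ n * k ! * m ! := by exact_mod_cast Nat.factorial_add_le_two_pow_mul k m
      _ ≤ 2 ^ n * k ! * (2 * 2 ^ n * Gamma (k * α)) := by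
          gcongr; exact hm.trans (by gcongr)
      _ = 2 * 4 ^ n * (k ! * Gamma (k * α)) := by
          rw [show (4 : ℝ) = 2 * 2 by norm_num, mul_pow]; ring
  have hpow : A ^ k ≤ R ^ (n + 1) := by
    have hR : 1 ≤ R := le_add_of_nonneg_left (by positivity)
    calc A ^ k = (A ^ (1 + α)⁻¹) ^ ((k : ℝ) * (1 + α)) := by
          rw [← rpow_mul hA, show (1 + α)⁻¹ * ((k : ℝ) * (1 + α)) = k by field_simp, rpow_natCast]
      _ ≤ R ^ ((k : ℝ) * (1 + α)) := by gcongr; linarith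
      _ ≤ R ^ ((n + 1 : ℕ) : ℝ) :=
          rpow_le_rpow_of_exponent_le hR
            (by push_cast [n]; linarith [Nat.lt_floor_add_one ((k : ℝ) * α)])
      _ = R ^ (n + 1) := rpow_natCast _ _
  unfold wrightTerm
  rw [mul_div_assoc', div_le_div_iff₀ (by positivity) (by positivity)]
  calc A ^ k * n ! ≤ R ^ (n + 1) * (2 * 4 ^ n * (k ! * Gamma (k * α))) := by gcongr
    _ = _ := by rw [mul_pow, pow_succ]; ring

theorem strictMono_add_floor_mul (hα : 0 ≤ α) : StrictMono fun k : ℕ => k + ⌊k * α⌋₊ :=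
  strictMono_id.add_monotone fun _ _ hkl => Nat.floor_le_floor (by gcongr)

theorem injective_succ_add_floor_mul (hα : 0 ≤ α) :
    Function.Injective fun j : ℕ => (j + 1) + ⌊((j + 1 : ℕ) : ℝ) * α⌋₊ :=
  ((strictMono_add_floor_mul hα).comp (strictMono_id.add_const 1)).injective

theorem summable_wrightTerm_succ (hα : 0 < α) (hA : 0 ≤ A) :
    Summable fun j : ℕ => wrightTerm α A (j + 1) :=
  (((Real.summable_pow_div_factorial _).mul_left _).comp_injective
    (injective_succ_add_floor_mul hα.le)).of_nonneg_of_le (fun _ => wrightTerm_nonneg hα.le hA _)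
    fun j => wrightTerm_le hα hA (Nat.le_add_left 1 j)

theorem wrightH_le (hα : 0 < α) (hA : 0 ≤ A) :
    wrightH α A ≤ 2 * (A ^ (1 + α)⁻¹ + 1) * exp (4 * (A ^ (1 + α)⁻¹ + 1)) := by
  set R := A ^ (1 + α)⁻¹ + 1
  have hexp : HasSum (fun n : ℕ => 2 * R * ((4 * R) ^ n / n !)) (2 * R * exp (4 * R)) := by
    rw [exp_eq_exp_ℝ]
    exact (NormedSpace.expSeries_div_hasSum_exp (4 * R)).mul_left (2 * R)
  exact hasSum_le_inj _ (injective_succ_add_floor_mul hα.le) (fun _ _ => by positivity)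
    (fun j => wrightTerm_le hα hA (Nat.le_add_left 1 j)) (summable_wrightTerm_succ hα hA).hasSum
    hexp

end Wright

section Tweedie

variable {α Λ β t ε : ℝ}

theorem tweedie_term_le (hα : 0 < α) (hΛ : 0 ≤ Λ) (hβ : 0 < β) (ht : 0 < t) (htε : t ≤ ε)
    (j : ℕ) :
    Λ ^ (j + 1) / ((j + 1)! : ℝ) * (t ^ (((j : ℝ) + 1) * α - 1) * exp (-t / β)
        / (Gamma (((j : ℝ) + 1) * α) * β ^ (((j : ℝ) + 1) * α)))
      ≤ t ^ (α - 1) * ε ^ (-α) * wrightTerm α (Λ * ε ^ α / β ^ α) (j + 1) := by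
  set s : ℝ := ((j : ℝ) + 1) * α
  have hε : 0 < ε := ht.trans_le htε
  have hsα : 0 ≤ s - α := by have : (0 : ℝ) ≤ j := j.cast_nonneg; simp only [s]; nlinarith
  have hnum : t ^ (s - 1) * exp (-t / β) ≤ t ^ (α - 1) * ε ^ (-α) * ε ^ s :=
    calc t ^ (s - 1) * exp (-t / β) ≤ t ^ (s - 1) :=
          mul_le_of_le_one_right (by positivity)
            (exp_le_one_iff.mpr (by rw [neg_div]; exact neg_nonpos.mpr (by positivity)))
      _ = t ^ (α - 1) * t ^ (s - α) := by rw [← rpow_add ht]; ring_nf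
      _ ≤ t ^ (α - 1) * ε ^ (s - α) := by gcongr
      _ = t ^ (α - 1) * ε ^ (-α) * ε ^ s := by rw [mul_assoc, ← rpow_add hε]; ring_nf
  have hA : (Λ * ε ^ α / β ^ α) ^ (j + 1) = Λ ^ (j + 1) * ε ^ s / β ^ s := by
    simp only [s]
    rw [div_pow, mul_pow, ← rpow_natCast (ε ^ α), ← rpow_natCast (β ^ α), ← rpow_mul hε.le,
      ← rpow_mul hβ.le]
    push_cast; ring_nf
  unfold wrightTerm
  rw [hA, show ((j + 1 : ℕ) : ℝ) * α = s by simp [s]]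
  calc Λ ^ (j + 1) / ((j + 1)! : ℝ) * (t ^ (s - 1) * exp (-t / β) / (Gamma s * β ^ s))
      ≤ Λ ^ (j + 1) / ((j + 1)! : ℝ) * (t ^ (α - 1) * ε ^ (-α) * ε ^ s / (Gamma s * β ^ s)) := by
        gcongr
    _ = _ := by field_simp

theorem tsum_tweedie_le (hα : 0 < α) (hΛ : 0 ≤ Λ) (hβ : 0 < β) (ht : 0 < t) (htε : t ≤ ε) :
    ∑' j : ℕ, Λ ^ (j + 1) / ((j + 1)! : ℝ) * (t ^ (((j : ℝ) + 1) * α - 1) * exp (-t / β)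
        / (Gamma (((j : ℝ) + 1) * α) * β ^ (((j : ℝ) + 1) * α)))
      ≤ t ^ (α - 1) * ε ^ (-α) * wrightH α (Λ * ε ^ α / β ^ α) := by
  have hε : 0 < ε := ht.trans_le htε
  have hsum := (summable_wrightTerm_succ hα (by positivity : 0 ≤ Λ * ε ^ α / β ^ α)).mul_left
    (t ^ (α - 1) * ε ^ (-α))
  rw [wrightH, ← tsum_mul_left]
  refine Summable.tsum_le_tsum (tweedie_term_le hα hΛ hβ ht htε)
    (hsum.of_nonneg_of_le (fun j => ?_) (tweedie_term_le hα hΛ hβ ht htε)) hsum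
  positivity

end Tweedie

theorem exists_pos_lt_mul_rpow_le {α δ M : ℝ} (c : ℝ) (hα : 0 < α) (hδ : 0 < δ) (hM : 0 < M) :
    ∃ ε, 0 < ε ∧ ε < M ∧ c * ε ^ α ≤ δ := by
  have hlim : Tendsto (fun ε : ℝ => c * ε ^ α) (𝓝[>] 0) (𝓝 0) := by
    simpa [zero_rpow hα.ne'] using
      ((continuousAt_rpow_const 0 α (Or.inr hα.le)).const_mul c).tendsto.mono_left
        nhdsWithin_le_nhds
  have hIoo : ∀ᶠ ε in 𝓝[>] (0 : ℝ), ε ∈ Set.Ioo 0 M := Ioo_mem_nhdsGT hM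
  obtain ⟨ε, ⟨hε, hεM⟩, hεδ⟩ := (hIoo.and (hlim.eventually (eventually_le_nhds hδ))).exists
  exact ⟨ε, hε, hεM, hεδ⟩

theorem exp_neg_div_mul_le {c h R : ℝ} (hh : 0 < h) (hh1 : h ≤ 1) (hR0 : 0 ≤ R)
    (hR : R ≤ c / (8 * h) + 1) :
    exp (-(c / h)) * (2 * R * exp (4 * R))
      ≤ (c / 4 + 2) * exp 4 * h ^ (-1 : ℝ) * exp (-(c / 2) / h) := by
  have hRh : 8 * (h * R) ≤ c + 8 * h := by
    rw [div_add_one (by positivity), le_div_iff₀ (by positivity)] at hR; linarith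
  have h2R : 2 * R ≤ (c / 4 + 2) * h ^ (-1 : ℝ) := by
    rw [rpow_neg_one, ← div_eq_mul_inv, le_div_iff₀ hh]; linarith
  have hexp : exp (-(c / h)) * exp (4 * R) ≤ exp 4 * exp (-(c / 2) / h) := by
    rw [← exp_add, ← exp_add, exp_le_exp]
    have : 4 * R ≤ c / (2 * h) + 4 := by
      calc 4 * R ≤ 4 * (c / (8 * h) + 1) := by gcongr
        _ = c / (2 * h) + 4 := by field_simp; ring
    have e1 : -(c / 2) / h = -(c / h) + c / (2 * h) := by field_simp; ring
    linarith
  calc exp (-(c / h)) * (2 * R * exp (4 * R)) = 2 * R * (exp (-(c / h)) * exp (4 * R)) := by ring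
    _ ≤ (c / 4 + 2) * h ^ (-1 : ℝ) * (exp 4 * exp (-(c / 2) / h)) :=
        mul_le_mul h2R hexp (by positivity) ((by positivity : (0 : ℝ) ≤ 2 * R).trans h2R)
    _ = _ := by ring

theorem wright_argument_rpow_le {α b c ε h : ℝ} (hα : 0 < α) (hb : 0 < b) (hc : 0 < c)
    (hε : 0 < ε) (hh : 0 < h) (hεc : c / b ^ α * ε ^ α ≤ (c / 8) ^ (1 + α)) :
    (c / h * ε ^ α / (h * b) ^ α) ^ (1 + α)⁻¹ ≤ c / (8 * h) := by
  have hle : c / h * ε ^ α / (h * b) ^ α ≤ (c / (8 * h)) ^ (1 + α) :=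
    calc c / h * ε ^ α / (h * b) ^ α = c / b ^ α * ε ^ α / h ^ (1 + α) := by
          rw [mul_rpow hh.le hb.le, rpow_one_add' hh.le (by positivity)]; field_simp
      _ ≤ (c / 8) ^ (1 + α) / h ^ (1 + α) := by gcongr
      _ = (c / (8 * h)) ^ (1 + α) := by rw [← div_rpow (by positivity) hh.le, div_div]
  calc (c / h * ε ^ α / (h * b) ^ α) ^ (1 + α)⁻¹ ≤ ((c / (8 * h)) ^ (1 + α)) ^ (1 + α)⁻¹ := by
        gcongr
    _ = c / (8 * h) := rpow_rpow_inv (by positivity) (by positivity)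

theorem tweedie_near_zero_bound (p x : ℝ) (hp1 : 1 < p) (hp2 : p < 2) (hx : 0 < x) :
    let α := (2 - p) / (p - 1)
    ∃ ε a₀ c₀ C₀ : ℝ, 0 < ε ∧ ε < x / 2 ∧ 0 < a₀ ∧ 0 < c₀ ∧ 0 < C₀ ∧
      ∃ h₀ : ℝ, 0 < h₀ ∧ ∀ h : ℝ, 0 < h → h ≤ h₀ → ∀ t : ℝ, 0 < t → t ≤ ε →
        (Real.exp (-(x ^ (2 - p) / (h * (2 - p)))) *
          ∑' j : ℕ, ((x ^ (2 - p) / (h * (2 - p))) ^ (j + 1) / (Nat.factorial (j + 1))) *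
            (t ^ (((j : ℝ) + 1) * α - 1) * Real.exp (-t / (h * (p - 1) * x ^ (p - 1)))
              / (Real.Gamma (((j : ℝ) + 1) * α)
                  * (h * (p - 1) * x ^ (p - 1)) ^ (((j : ℝ) + 1) * α))))
          ≤ C₀ * h ^ (-a₀) * Real.exp (-c₀ / h) * t ^ (α - 1) := by
  intro α
  have hα : 0 < α := div_pos (by linarith) (by linarith)
  set c := x ^ (2 - p) / (2 - p)
  set b := (p - 1) * x ^ (p - 1)
  have hc : 0 < c := div_pos (rpow_pos_of_pos hx _) (by linarith)
  have hb : 0 < b := mul_pos (by linarith) (rpow_pos_of_pos hx _)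
  obtain ⟨ε, hε, hεx, hεc⟩ :=
    exists_pos_lt_mul_rpow_le (c / b ^ α) hα (by positivity : 0 < (c / 8) ^ (1 + α)) (half_pos hx)
  refine ⟨ε, 1, c / 2, ε ^ (-α) * (c / 4 + 2) * exp 4, hε, hεx, one_pos, by positivity,
    by positivity, 1, one_pos, fun h hh hh1 t ht htε => ?_⟩
  rw [show x ^ (2 - p) / (h * (2 - p)) = c / h by rw [div_div, mul_comm h],
    show h * (p - 1) * x ^ (p - 1) = h * b by ring]
  set A := c / h * ε ^ α / (h * b) ^ α
  have hA : A ^ (1 + α)⁻¹ ≤ c / (8 * h) := wright_argument_rpow_le hα hb hc hε hh hεc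
  calc exp (-(c / h)) * _ ≤ exp (-(c / h)) * (t ^ (α - 1) * ε ^ (-α) * wrightH α A) := by
        gcongr; exact tsum_tweedie_le hα (by positivity) (by positivity) ht htε
    _ ≤ t ^ (α - 1) * ε ^ (-α)
          * (exp (-(c / h)) * (2 * (A ^ (1 + α)⁻¹ + 1) * exp (4 * (A ^ (1 + α)⁻¹ + 1)))) := by
        rw [mul_left_comm]; gcongr; exact wrightH_le hα (by positivity)
    _ ≤ t ^ (α - 1) * ε ^ (-α) * ((c / 4 + 2) * exp 4 * h ^ (-1 : ℝ) * exp (-(c / 2) / h)) :=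
        mul_le_mul_of_nonneg_left (exp_neg_div_mul_le hh hh1 (by positivity) (by linarith))
          (by positivity)
    _ = _ := by ring
end
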